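/- arXiv:2508.21742 — 2 statements merged into one kernel-verified Lean document; each statement's English description precedes it below -/
import Mathlib

section
/- If the summary graph of an FT-DAG G contains an edge X→Y, then G contains at least one edge from some vertex (X,t') of the X-series to some vertex (Y,t) of the Y-series with t' ≤ t. Consequently, if for a fixed time t the only candidate edge from the X-series into (Y,t) allowed by the skeleton is the instantaneous edge between (X,t) and (Y,t), and stationarity implies all times are symmetric, then this instantaneous edge must be oriented (X,t)→(Y,t). -/
def sumEdge {V : Type*} (E : V × ℤ → V × ℤ → Prop) (A B : V) : Prop :=
  ∃ t' t : ℤ, t' ≤ t ∧ E (A, t') (B, t)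

/-- Background-knowledge rule: an SCG edge `X → Y` is realized by some
cross-series edge; if moreover the only edges from the `X`-series into the
`Y`-series permitted by the skeleton are instantaneous, then under
stationarity the instantaneous edge `(X,t) → (Y,t)` is present (hence
oriented) at every time `t`. -/
theorem scg_edge_forces_instantaneous {V : Type*}
    (E : V × ℤ → V × ℤ → Prop)
    (hacyc : ∀ v, ¬ Relation.TransGen E v v)
    (htemp : ∀ a b, E a b → a.2 ≤ b.2)
    (hstat : ∀ (A B : V) (a b k : ℤ), E (A, a) (B, b) → E (A, a + k) (B, b + k))
    (X Y : V)
    (hsum : sumEdge E X Y)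
    (honly : ∀ a b : ℤ, E (X, a) (Y, b) → a = b) :
    (∃ t' t : ℤ, t' ≤ t ∧ E (X, t') (Y, t)) ∧ (∀ t : ℤ, E (X, t) (Y, t)) := by
  obtain ⟨t', t, hle, hE⟩ := hsum
  have ht : t' = t := honly t' t hE
  subst ht
  refine ⟨⟨t', t', le_refl _, hE⟩, fun s => ?_⟩
  have := hstat X Y t' t' (s - t') hE
  simpa using this
end

section
/- In any DAG G, the parents of a vertex y d-separate y from its non-descendants: for the local Markov property, any vertex z that is a non-descendant of y and not a parent of y is d-separated from y given the set of parents of y. -/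
/-!
Read a d-connecting path from `y` to `z`. If it leaves `y` along an edge `y ← v`, then `v` is a
parent of `y`; it is not `z`, and it cannot be a collider (that would need `y → v → y`), so it is
a conditioned non-collider. If it leaves along `y → v`, the path keeps following edges forward,
because its first backward edge would make a collider lying below `y` whose activating descendant
is a parent of `y`, closing a cycle. So the whole path is directed and `z` is a descendant of `y`.
-/

variable {V : Type*}

def dadj (E : V → V → Prop) (a b : V) : Prop := E a b ∨ E b a

/-- A list of vertices is a d-connecting path given a conditioning set `S`:
it is a genuine path (consecutive vertices adjacent, no repeats), every
collider on it has a descendant in `S`, and every non-collider on it is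
outside `S`. -/
def DConnecting (E : V → V → Prop) (S : Set V) (p : List V) : Prop :=
  2 ≤ p.length ∧ p.Chain' (dadj E) ∧ p.Nodup ∧
  ∀ a b c : V, [a, b, c] <:+: p →
    ((E a b ∧ E c b) → ∃ s ∈ S, Relation.ReflTransGen E b s) ∧
    (¬ (E a b ∧ E c b) → b ∉ S)

/-- `u` and `v` are d-separated given `S`: no d-connecting path joins them. -/
def DSep (E : V → V → Prop) (S : Set V) (u v : V) : Prop :=
  ¬ ∃ p : List V, DConnecting E S p ∧ p.head? = some u ∧ p.getLast? = some v

theorem dadj_comm {E : V → V → Prop} {a b : V} : dadj E a b ↔ dadj E b a :=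
  or_comm

theorem DConnecting.reverse {E : V → V → Prop} {S : Set V} {p : List V}
    (hp : DConnecting E S p) : DConnecting E S p.reverse := by
  obtain ⟨hlen, hchain, hnodup, htrip⟩ := hp
  refine ⟨by simpa using hlen, List.isChain_reverse.mpr (hchain.imp fun _ _ h => dadj_comm.mp h),
    List.nodup_reverse.mpr hnodup, fun a b c hinf => ?_⟩
  have hinf' : [c, b, a] <:+: p := by simpa using List.reverse_infix.mpr hinf
  exact ⟨fun hcol => (htrip c b a hinf').1 hcol.symm,
    fun hncol => (htrip c b a hinf').2 fun hcol => hncol hcol.symm⟩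

theorem DSep.symm {E : V → V → Prop} {S : Set V} {u v : V} (h : DSep E S u v) :
    DSep E S v u := by
  rintro ⟨p, hp, hhead, hlast⟩
  exact h ⟨p.reverse, hp.reverse, by rwa [List.head?_reverse], by rwa [List.getLast?_reverse]⟩

theorem reflTransGen_of_getLast?_of_forward_start {E : V → V → Prop} {S : Set V} {x : V}
    (hS : ∀ s ∈ S, ¬ Relation.ReflTransGen E x s) :
    ∀ (q : List V) (u v w : V), Relation.ReflTransGen E x u → E u v →
      (u :: v :: q).IsChain (dadj E) →
      (∀ a b c : V, [a, b, c] <:+: u :: v :: q → E a b → E c b →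
        ∃ s ∈ S, Relation.ReflTransGen E b s) →
      (u :: v :: q).getLast? = some w → Relation.ReflTransGen E x w
  | [], u, v, w, hxu, huv, _, _, hlast => by
    obtain rfl : v = w := by simpa using hlast
    exact hxu.tail huv
  | t :: q, u, v, w, hxu, huv, hchain, hcol, hlast => by
    have hxv := hxu.tail huv
    have htail := (List.isChain_cons_cons.mp hchain).2
    rcases (List.isChain_cons_cons.mp htail).1 with hvt | htv
    · refine reflTransGen_of_getLast?_of_forward_start hS q v t w hxv hvt htail
        (fun a b c hinf => hcol a b c (hinf.trans (List.suffix_cons u _).isInfix)) ?_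
      simpa using hlast
    · obtain ⟨s, hs, hvs⟩ := hcol u v t ⟨[], q, rfl⟩ huv htv
      exact absurd (hxv.trans hvs) (hS s hs)

theorem parents_dsep_nondescendants_general (E : V → V → Prop)
    (hacyc : ∀ v, ¬ Relation.TransGen E v v)
    (y z : V)
    (hnd : ¬ Relation.ReflTransGen E y z)
    (hnp : ¬ E z y) :
    DSep E {x | E x y} z y := by
  refine DSep.symm ?_
  rintro ⟨p, ⟨hlen, hchain, -, htrip⟩, hhead, hlast⟩
  obtain ⟨u, v, rest, rfl⟩ : ∃ u v rest, p = u :: v :: rest := by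
    match p, hlen with
    | u :: v :: rest, _ => exact ⟨u, v, rest, rfl⟩
  obtain rfl : y = u := by simpa [eq_comm] using hhead
  rcases (List.isChain_cons_cons.mp hchain).1 with hyv | hvy
  · have hparent_not_desc : ∀ s ∈ {x | E x y}, ¬ Relation.ReflTransGen E y s :=
      fun s hsy hys => hacyc y (Relation.TransGen.tail' hys hsy)
    exact hnd (reflTransGen_of_getLast?_of_forward_start hparent_not_desc rest y v z .refl hyv hchain
      (fun a b c hinf hab hcb => (htrip a b c hinf).1 ⟨hab, hcb⟩) hlast)
  · cases rest with
    | nil =>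
      obtain rfl : v = z := by simpa using hlast
      exact hnp hvy
    | cons w rest =>
      have hnoncollider : ¬ (E y v ∧ E w v) :=
        fun hcol => hacyc y (.head hcol.1 (.single hvy))
      exact (htrip y v w ⟨[], rest, rfl⟩).2 hnoncollider hvy

/-- Local Markov property, graphical core: in a finite DAG, any non-descendant
`z` of `y` that is not a parent of `y` is d-separated from `y` given the
parents of `y`. -/
theorem parents_dsep_nondescendants [Fintype V] (E : V → V → Prop)
    (hacyc : ∀ v, ¬ Relation.TransGen E v v)
    (y z : V)
    (hnd : ¬ Relation.ReflTransGen E y z)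
    (hnp : ¬ E z y) :
    DSep E {x | E x y} z y :=
  parents_dsep_nondescendants_general E hacyc y z hnd hnp
end
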